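/- arXiv:1606.08510 — 5 statements merged into one kernel-verified Lean document; each statement's English description precedes it below -/
import Mathlib

section
/- Let p be a prime, t ≥ 1, q = p^t, and let u ≥ 2 be a divisor of q + 1. Let f be the multiplicative order of p modulo u, and set s = 2t / f. Then s is even if and only if u = 2. -/
theorem stmt_1 (p t q u : ℕ) (hp : p.Prime) (ht : 1 ≤ t) (hq : q = p ^ t)
    (hu : u ∣ q + 1) (hu2 : 2 ≤ u) (f s : ℕ) (hf : f = orderOf (p : ZMod u))
    (hs : s = 2 * t / f) :
    Even s ↔ u = 2 := by
  subst hq hf hs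
  haveI : NeZero u := ⟨by omega⟩
  have h1 : ((p : ZMod u)) ^ t = -1 := by
    have h0 : ((p ^ t + 1 : ℕ) : ZMod u) = 0 :=
      (ZMod.natCast_eq_zero_iff _ _).mpr hu
    push_cast at h0
    linear_combination h0
  have h2 : ((p : ZMod u)) ^ (2 * t) = 1 := by
    rw [two_mul, pow_add, h1]; ring
  have hfd : orderOf ((p : ZMod u)) ∣ 2 * t := orderOf_dvd_of_pow_eq_one h2
  have hO : 0 < orderOf ((p : ZMod u)) := by
    rcases Nat.eq_zero_or_pos (orderOf ((p : ZMod u))) with h | h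
    · have := Nat.eq_zero_of_zero_dvd (h ▸ hfd); omega
    · exact h
  constructor
  · intro hev
    obtain ⟨k, hk⟩ := hev
    have h2t : orderOf ((p : ZMod u)) * (2 * t / orderOf ((p : ZMod u))) = 2 * t :=
      Nat.mul_div_cancel' hfd
    have htk : t = orderOf ((p : ZMod u)) * k := by
      rw [hk, mul_add] at h2t; omega
    have h3 : ((p : ZMod u)) ^ t = 1 := by
      rw [htk, pow_mul, pow_orderOf_eq_one, one_pow]
    have h4 : ((2 : ℕ) : ZMod u) = 0 := by
      push_cast
      linear_combination h1 - h3
    have h5 : u ∣ 2 := (ZMod.natCast_eq_zero_iff _ _).mp h4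
    have := Nat.le_of_dvd (by norm_num) h5
    omega
  · intro h
    subst h
    have hpo : p % 2 = 1 := by
      rcases Nat.even_or_odd p with he | ho
      · exfalso
        obtain ⟨m, hm⟩ := hu
        obtain ⟨n, hn⟩ := dvd_pow he.two_dvd (show t ≠ 0 by omega)
        omega
      · obtain ⟨k, hk⟩ := ho; omega
    have hp1 : (p : ZMod 2) = 1 := by
      rw [← ZMod.natCast_mod, hpo]; norm_num
    rw [hp1, orderOf_one]
    simp
end

section
/- Let p be a prime, t ≥ 1, q = p^t, and let u > 2 divide q + 1. If v is the smallest positive integer with p^v ≡ -1 (mod u), then v divides t and t/v is odd. -/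
theorem stmt_3 (p t q u : ℕ) (hp : p.Prime) (ht : 1 ≤ t) (hq : q = p ^ t)
    (hu : u ∣ q + 1) (hu2 : 2 < u) (v : ℕ) (hv : 0 < v)
    (hpv : (p : ZMod u) ^ v = -1)
    (hmin : ∀ w : ℕ, 0 < w → (p : ZMod u) ^ w = -1 → v ≤ w) :
    v ∣ t ∧ Odd (t / v) := by
  haveI : Fact (2 < u) := ⟨hu2⟩
  have hne : (-1 : ZMod u) ≠ 1 := ZMod.neg_one_ne_one
  have h2v : (p : ZMod u) ^ (2 * v) = 1 := by
    rw [mul_comm, pow_mul, hpv]; ring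
  have key : ∀ w, 0 < w → (p : ZMod u) ^ w = -1 → v ∣ w ∧ Odd (w / v) := by
    intro w
    induction w using Nat.strong_induction_on with
    | _ w ih =>
      intro hw hpw
      have hvw : v ≤ w := hmin w hw hpw
      rcases lt_or_ge w (2 * v) with h | h
      · have h1 : (p : ZMod u) ^ (2 * v - w) * (p : ZMod u) ^ w = 1 := by
          rw [← pow_add, show 2 * v - w + w = 2 * v by omega, h2v]
        have h2 : (p : ZMod u) ^ (2 * v - w) = -1 := by
          rw [hpw] at h1; linear_combination -h1
        have hwv : w = v := by
          have hpos : 0 < 2 * v - w := by omega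
          have := hmin _ hpos h2
          omega
        subst hwv
        exact ⟨dvd_refl w, by simp [Nat.div_self hw]⟩
      · have hwne : w ≠ 2 * v := by
          intro hh
          rw [hh, h2v] at hpw
          exact hne hpw.symm
        have hpos : 0 < w - 2 * v := by omega
        have h2 : (p : ZMod u) ^ (w - 2 * v) = -1 := by
          have h3 : (p : ZMod u) ^ (w - 2 * v) * (p : ZMod u) ^ (2 * v)
              = (p : ZMod u) ^ w := by
            rw [← pow_add]; congr 1; omega
          rw [h2v, mul_one, hpw] at h3
          exact h3
        obtain ⟨hd, ho⟩ := ih (w - 2 * v) (by omega) hpos h2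
        obtain ⟨k, hk⟩ := hd
        have hwk : w = v * (k + 2) := by rw [mul_add]; omega
        constructor
        · exact ⟨k + 2, hwk⟩
        · rw [hwk, Nat.mul_div_cancel_left _ hv]
          have : (w - 2 * v) / v = k := by rw [hk, Nat.mul_div_cancel_left _ hv]
          rw [this] at ho
          obtain ⟨m, hm⟩ := ho
          exact ⟨m + 1, by omega⟩
  have hpt : (p : ZMod u) ^ t = -1 := by
    have : ((q + 1 : ℕ) : ZMod u) = 0 := (ZMod.natCast_eq_zero_iff _ _).mpr hu
    rw [hq] at this
    push_cast at this
    linear_combination this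
  exact key t ht hpt
end

section
/- Let q be a prime power, γ a generator of F_{q^2}^×, and a an integer with gcd(q+1, a) = 1. Then the irreducible cyclic code C = { (Tr(γ^(a i) β))_{i=0}^{n-1} : β ∈ F_{q^2} } with n = (q^2-1)/gcd(q^2-1,a) has every nonzero codeword of Hamming weight exactly nq/(q+1). -/
set_option maxHeartbeats 1000000

-- counting lemma over range
lemma countRange_aux (k m r : ℕ) (hk : 0 < k) (hr : r < k) :
    ((Finset.range (k * m)).filter (fun i => i % k = r)).card = m := by
  have key : ((Finset.range (k * m)).filter (fun i => i % k = r)).card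
      = (Finset.range m).card := by
    apply Finset.card_bij' (fun i _ => i / k) (fun j _ => k * j + r)
    · intro a ha
      simp only [Finset.mem_filter, Finset.mem_range] at ha
      simp only [Finset.mem_range]
      exact Nat.div_lt_of_lt_mul ha.1
    · intro j hj
      simp only [Finset.mem_range] at hj
      simp only [Finset.mem_filter, Finset.mem_range]
      refine ⟨?_, ?_⟩
      · have h1 : k * (j + 1) ≤ k * m := Nat.mul_le_mul_left k hj
        have h2 : k * (j + 1) = k * j + k := Nat.mul_succ k j
        omega
      · rw [Nat.mul_add_mod, Nat.mod_eq_of_lt hr]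
    · intro a ha
      simp only [Finset.mem_filter, Finset.mem_range] at ha
      conv_rhs => rw [← Nat.div_add_mod a k]
      rw [ha.2]
    · intro j hj
      rw [Nat.mul_add_div hk, Nat.div_eq_of_lt hr, add_zero]
  rw [key, Finset.card_range]

lemma countFin_aux (n k r : ℕ) (hk : 0 < k) (hr : r < k) (hd : k ∣ n) :
    ((Finset.univ : Finset (Fin n)).filter (fun (i : Fin n) => (i : ℕ) % k = r)).card = n / k := by
  obtain ⟨m, rfl⟩ := hd
  rw [Nat.mul_div_cancel_left _ hk]
  conv_rhs => rw [← countRange_aux k m r hk hr]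
  refine Finset.card_nbij (fun (i : Fin (k * m)) => (i : ℕ)) ?_ ?_ ?_
  · intro a ha
    simp only [Finset.mem_coe, Finset.mem_filter, Finset.mem_univ, true_and] at ha
    simp only [Finset.mem_coe, Finset.mem_filter, Finset.mem_range]
    exact ⟨a.isLt, ha⟩
  · intro x _ y _ h
    exact Fin.val_injective h
  · intro b hb
    simp only [Finset.mem_coe, Finset.mem_filter, Finset.mem_range] at hb
    exact ⟨⟨b, hb.1⟩, by simp [hb.2], rfl⟩

lemma mem_subfield_of_pow (q : ℕ) (hq : 2 ≤ q) {F : Type*} [Field F] [Fintype F]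
    [DecidableEq F] (K : Subfield F) [Fintype K] (hK : Fintype.card K = q) :
    ∀ x : F, x ^ q = x → x ∈ K := by
  classical
  set p : Polynomial F := Polynomial.X ^ q - Polynomial.X with hp
  have hpdeg : p.natDegree = q := by
    rw [hp]
    compute_degree!
    · rw [if_neg (by omega)]
      simp
    · omega
  have hp0 : p ≠ 0 := by
    intro h
    rw [h] at hpdeg
    simp at hpdeg
    omega
  have hroot : ∀ x : F, x ∈ p.roots.toFinset ↔ x ^ q = x := by
    intro x
    rw [Multiset.mem_toFinset, Polynomial.mem_roots hp0]
    simp [Polynomial.IsRoot, hp, sub_eq_zero]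
  have hsub : (Finset.univ.filter (fun x : F => x ∈ K)) ⊆ p.roots.toFinset := by
    intro x hx
    simp only [Finset.mem_filter, Finset.mem_univ, true_and] at hx
    rw [hroot]
    have : (⟨x, hx⟩ : K) ^ q = ⟨x, hx⟩ := by
      rw [← hK]
      exact FiniteField.pow_card _
    have h2 := congrArg (Subtype.val) this
    push_cast at h2
    exact h2
  have hcard1 : (Finset.univ.filter (fun x : F => x ∈ K)).card = q := by
    rw [← hK]
    exact (Fintype.card_of_subtype (Finset.univ.filter (fun x => x ∈ K)) (by simp)).symm
  have hcard2 : p.roots.toFinset.card ≤ q := by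
    calc p.roots.toFinset.card ≤ Multiset.card p.roots := p.roots.toFinset_card_le
    _ ≤ p.natDegree := p.card_roots'
    _ = q := hpdeg
  have heq : (Finset.univ.filter (fun x : F => x ∈ K)) = p.roots.toFinset :=
    Finset.eq_of_subset_of_card_le hsub (by omega)
  intro x hx
  have : x ∈ p.roots.toFinset := (hroot x).mpr hx
  rw [← heq] at this
  simpa using this

theorem stmt_10 (q : ℕ) (hq : IsPrimePow q)
    (F : Type*) [Field F] [Fintype F] [DecidableEq F] (hF : Fintype.card F = q ^ 2)
    (K : Subfield F) [Fintype K] (hK : Fintype.card K = q)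
    (γ : Fˣ) (hγ : ∀ x : Fˣ, x ∈ Subgroup.zpowers γ)
    (a : ℤ) (ha : Int.gcd (q + 1 : ℕ) a = 1)
    (n : ℕ) (hn : n = (q ^ 2 - 1) / Int.gcd (q ^ 2 - 1 : ℕ) a)
    (c : F → Fin n → K)
    (hc : ∀ β i, c β i = Algebra.trace K F ((γ ^ (a * (i : ℕ)) : Fˣ) * β)) :
    ∀ β : F, c β ≠ 0 →
      (Finset.univ.filter fun i : Fin n => c β i ≠ 0).card = n * q / (q + 1) := by
  intro β hβ0
  have hq2 : 2 ≤ q := hq.two_le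
  -- arithmetic on n
  have hqq : q ^ 2 - 1 = (q + 1) * (q - 1) := by
    obtain ⟨t, rfl⟩ : ∃ t, q = t + 2 := ⟨q - 2, by omega⟩
    have e1 : (t + 2) ^ 2 = t * t + 4 * t + 4 := by ring
    have e2 : (t + 2 + 1) * (t + 2 - 1) = t * t + 4 * t + 3 := by
      have : t + 2 - 1 = t + 1 := by omega
      rw [this]; ring
    omega
  set d : ℕ := Int.gcd ((q ^ 2 - 1 : ℕ) : ℤ) a with hd
  have hdn : d = Nat.gcd (q ^ 2 - 1) a.natAbs := by
    simp [hd, Int.gcd]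
  have hdd : d ∣ q ^ 2 - 1 := hdn ▸ Nat.gcd_dvd_left _ _
  have hda : d ∣ a.natAbs := hdn ▸ Nat.gcd_dvd_right _ _
  have hacop : Nat.Coprime (q + 1) a.natAbs := by
    have h := ha
    exact h
  have hdcop : Nat.Coprime d (q + 1) :=
    Nat.Coprime.coprime_dvd_left hda hacop.symm
  have hdq1 : d ∣ q - 1 := by
    refine hdcop.dvd_of_dvd_mul_right ?_
    rw [mul_comm (q - 1) (q + 1), ← hqq]
    exact hdd
  obtain ⟨e, he⟩ := hdq1
  have hd0 : 0 < d := by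
    rw [hdn]
    have h4 : 2 * 2 ≤ q * q := Nat.mul_le_mul hq2 hq2
    have h5 : q ^ 2 = q * q := sq q
    exact Nat.gcd_pos_of_pos_left _ (by omega)
  have hne : n = (q + 1) * e := by
    rw [hn, hqq, he, show (q + 1) * (d * e) = d * ((q + 1) * e) by ring,
      Nat.mul_div_cancel_left _ hd0]
  -- nonzero β and nonzero trace map
  obtain ⟨i0, hi0⟩ : ∃ i, c β i ≠ 0 := by
    by_contra h
    push_neg at h
    exact hβ0 (funext h)
  have hβ : β ≠ 0 := by
    rintro rfl
    apply hi0
    rw [hc]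
    simp
  set T : F →ₗ[K] K := Algebra.trace K F with hT
  have hT0 : T ≠ 0 := by
    intro h
    apply hi0
    rw [hc]
    show T _ = 0
    rw [h]
    simp
  -- finrank computations
  have hrank : Module.finrank K F = 2 := by
    have h1 : Fintype.card F = Fintype.card K ^ Module.finrank K F :=
      Module.card_eq_pow_finrank (K := K) (V := F)
    rw [hF, hK] at h1
    exact (Nat.pow_right_injective hq2 h1.symm)
  have hker : Module.finrank K (LinearMap.ker T) = 1 := by
    have h1 := LinearMap.finrank_range_add_finrank_ker T
    have hle : Module.finrank K (LinearMap.range T) ≤ 1 := by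
      have h2 := Submodule.finrank_le (LinearMap.range T)
      simpa [Module.finrank_self] using h2
    have hne' : LinearMap.range T ≠ ⊥ := by
      intro hbot
      exact hT0 (LinearMap.range_eq_bot.mp hbot)
    have h3 : 1 ≤ Module.finrank K (LinearMap.range T) :=
      Submodule.one_le_finrank_iff.mpr hne'
    rw [hrank] at h1
    omega
  obtain ⟨x₀, hx₀mem, hx₀⟩ : ∃ x ∈ LinearMap.ker T, x ≠ 0 := by
    have hnb : LinearMap.ker T ≠ ⊥ := by
      intro h
      rw [h] at hker
      simp at hker
    exact (Submodule.ne_bot_iff _).mp hnb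
  have hspan : (K ∙ x₀) = LinearMap.ker T := by
    apply Submodule.eq_of_le_of_finrank_eq
    · rwa [Submodule.span_singleton_le_iff_mem]
    · rw [finrank_span_singleton hx₀, hker]
  have hker_iff : ∀ x : F, T x = 0 ↔ ∃ k : K, k • x₀ = x := by
    intro x
    rw [← LinearMap.mem_ker, ← hspan, Submodule.mem_span_singleton]
  have hsmul : ∀ (k : K) (x : F), k • x = (k : F) * x := fun k x => rfl
  -- key criterion
  have key : ∀ x : F, x ≠ 0 → (T x = 0 ↔ (x / x₀) ^ (q - 1) = 1) := by
    intro x hx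
    constructor
    · intro h
      obtain ⟨k, hk⟩ := (hker_iff x).mp h
      have hk0 : k ≠ 0 := by
        rintro rfl
        rw [hsmul] at hk
        simp at hk
        exact hx hk.symm
      rw [hsmul] at hk
      have hxx : x / x₀ = (k : F) := by
        rw [← hk]
        field_simp
      rw [hxx]
      have hkp : k ^ (q - 1) = 1 := by
        rw [← hK]
        exact FiniteField.pow_card_sub_one_eq_one k hk0
      have := congrArg (Subtype.val) hkp
      push_cast at this
      exact this
    · intro h
      have hxq : (x / x₀) ^ q = x / x₀ := by
        have h1 : (x / x₀) ^ q = (x / x₀) ^ (q - 1) * (x / x₀) := by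
          rw [← pow_succ]
          congr 1
          omega
        rw [h1, h, one_mul]
      have hmem : x / x₀ ∈ K := mem_subfield_of_pow q hq2 K hK _ hxq
      have hxe : x = (⟨x / x₀, hmem⟩ : K) • x₀ := by
        rw [hsmul]
        field_simp
      rw [hxe, map_smul, LinearMap.mem_ker.mp hx₀mem, smul_zero]
  -- order of γ
  have hcardU : Fintype.card Fˣ = q ^ 2 - 1 := by
    rw [Fintype.card_units, hF]
  have hord : orderOf γ = q ^ 2 - 1 := by
    rw [orderOf_eq_card_of_forall_mem_zpowers hγ, Nat.card_eq_fintype_card, hcardU]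
  have hzpow : ∀ k : ℤ, γ ^ k = 1 ↔ ((q ^ 2 - 1 : ℕ) : ℤ) ∣ k := by
    intro k
    rw [← orderOf_dvd_iff_zpow_eq_one, hord]
  -- the unit β / x₀
  set v : Fˣ := Units.mk0 (β / x₀) (div_ne_zero hβ hx₀) with hv
  obtain ⟨m, hm⟩ := Subgroup.mem_zpowers_iff.mp (hγ v)
  -- coprimality data
  obtain ⟨u, w, huw⟩ : ∃ u w : ℤ, u * (q + 1) + w * a = 1 := by
    have hcop : IsCoprime ((q + 1 : ℕ) : ℤ) a := Int.isCoprime_iff_gcd_eq_one.mpr ha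
    obtain ⟨u, w, huw⟩ := hcop
    exact ⟨u, w, by push_cast at huw ⊢; linarith⟩
  set c0 : ℤ := w * m with hc0
  set rZ : ℤ := (-c0) % ((q : ℤ) + 1) with hrZ
  have hrZ0 : 0 ≤ rZ := Int.emod_nonneg _ (by omega)
  have hrZlt : rZ < (q : ℤ) + 1 := Int.emod_lt_of_pos _ (by omega)
  set r : ℕ := rZ.toNat with hr
  have hrlt : r < q + 1 := by omega
  have hdvdr : ((q : ℤ) + 1) ∣ (-c0 - rZ) := Int.dvd_self_sub_of_emod_eq rfl
  -- main condition
  have hcond : ∀ i : Fin n, c β i = 0 ↔ (i : ℕ) % (q + 1) = r := by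
    intro i
    rw [hc]
    show T _ = 0 ↔ _
    set x : F := ((γ ^ (a * ((i : ℕ) : ℤ)) : Fˣ) : F) * β with hx
    have hxne : x ≠ 0 := mul_ne_zero (Units.ne_zero _) hβ
    rw [key x hxne]
    have hxdiv : x / x₀ = ((γ ^ (a * ((i : ℕ) : ℤ)) * v : Fˣ) : F) := by
      rw [Units.val_mul, hv, Units.val_mk0, hx, mul_div_assoc]
    rw [hxdiv, ← Units.val_pow_eq_pow_val, Units.val_eq_one, ← hm, ← zpow_add,
      ← zpow_natCast (γ ^ (a * ((i : ℕ) : ℤ) + m)), ← zpow_mul, hzpow]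
    have hcast : ((q ^ 2 - 1 : ℕ) : ℤ) = ((q : ℤ) + 1) * ((q - 1 : ℕ) : ℤ) := by
      rw [hqq]
      push_cast [Nat.cast_sub (by omega : 1 ≤ q)]
      ring
    rw [hcast]
    have hq1ne : ((q - 1 : ℕ) : ℤ) ≠ 0 :=
      Int.natCast_ne_zero.mpr (by omega)
    rw [mul_dvd_mul_iff_right hq1ne]
    -- now: (q+1) ∣ (a * i + m) ↔ i % (q+1) = r
    constructor
    · intro hdvd
      have h1 : ((q : ℤ) + 1) ∣ ((i : ℕ) : ℤ) + c0 := by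
        have h2 : ((i : ℕ) : ℤ) + c0 = w * (a * ((i : ℕ) : ℤ) + m) + (u * (i : ℕ)) * ((q : ℤ) + 1) := by
          rw [hc0]
          linear_combination (-((i : ℕ) : ℤ)) * huw
        rw [h2]
        exact dvd_add (hdvd.mul_left w) (Dvd.intro_left _ rfl)
      have h3 : ((q : ℤ) + 1) ∣ ((i : ℕ) : ℤ) - (r : ℤ) := by
        have h4 : ((i : ℕ) : ℤ) - (r : ℤ) = (((i : ℕ) : ℤ) + c0) + (-c0 - rZ) := by
          rw [hr, Int.toNat_of_nonneg hrZ0]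
          ring
        rw [h4]
        exact dvd_add h1 hdvdr
      have h5 : (i : ℕ) ≡ r [MOD q + 1] := by
        rw [Nat.modEq_iff_dvd]
        push_cast
        have h6 := dvd_neg.mpr h3
        rwa [neg_sub] at h6
      have h7 := h5.symm
      rw [Nat.ModEq, Nat.mod_eq_of_lt hrlt] at h7
      exact h7.symm
    · intro hmod
      have h5 : (i : ℕ) ≡ r [MOD q + 1] := by
        rw [Nat.ModEq, Nat.mod_eq_of_lt hrlt]
        exact hmod
      have h3 : ((q : ℤ) + 1) ∣ ((i : ℕ) : ℤ) - (r : ℤ) := by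
        have := Nat.modEq_iff_dvd.mp h5.symm
        push_cast at this ⊢
        exact this
      have h1 : ((q : ℤ) + 1) ∣ ((i : ℕ) : ℤ) + c0 := by
        have h4 : ((i : ℕ) : ℤ) + c0 = (((i : ℕ) : ℤ) - (r : ℤ)) - (-c0 - rZ)
            - (rZ - (r : ℤ)) := by
          ring
        have hrz : rZ - (r : ℤ) = 0 := by
          rw [hr, Int.toNat_of_nonneg hrZ0]
          ring
        rw [h4, hrz, sub_zero]
        exact dvd_sub h3 hdvdr
      have h2 : a * ((i : ℕ) : ℤ) + m = a * (((i : ℕ) : ℤ) + c0) + (u * m) * ((q : ℤ) + 1) := by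
        rw [hc0]
        linear_combination (-m) * huw
      rw [h2]
      exact dvd_add (h1.mul_left a) (Dvd.intro_left _ rfl)
  -- counting
  classical
  have hcount : (Finset.univ.filter fun i : Fin n => c β i = 0).card = e := by
    have hfe : (Finset.univ.filter fun i : Fin n => c β i = 0)
        = (Finset.univ.filter fun i : Fin n => (i : ℕ) % (q + 1) = r) := by
      apply Finset.filter_congr
      intro i _
      exact hcond i
    rw [hfe, countFin_aux n (q + 1) r (by omega) hrlt ⟨e, hne⟩, hne,
      Nat.mul_div_cancel_left _ (by omega)]
  have htot : (Finset.univ.filter fun i : Fin n => c β i ≠ 0).card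
      = n - e := by
    have h1 : (Finset.univ.filter fun i : Fin n => c β i ≠ 0)
        = Finset.univ \ (Finset.univ.filter fun i : Fin n => c β i = 0) := by
      rw [← Finset.filter_not]
    rw [h1, Finset.card_sdiff_of_subset (Finset.filter_subset _ _), hcount]
    simp
  rw [htot, hne]
  have h2 : (q + 1) * e * q = (q + 1) * (e * q) := by ring
  rw [h2, Nat.mul_div_cancel_left _ (by omega : 0 < q + 1)]
  have h3 : (q + 1) * e = e * q + e := by ring
  omega
end

section
/- Let q be a prime power, γ a generator of F_{q^2}^×, a an integer with u = gcd(q+1, a) satisfying 2 ≤ u ≤ q, and n = (q^2-1)/gcd(q^2-1, a). Then the code C = { (Tr(γ^{a i} β))_{i=0}^{n-1} : β ∈ F_{q^2} } has exactly two nonzero weights: n(q+1-u)/(q+1), attained by (q^2-1)/u codewords, and n, attained by (q^2-1)(u-1)/u codewords. -/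
/-!
The kernel of `Tr : 𝔽_{q²} → 𝔽_q` is a line `𝔽_q · z`, and `𝔽_q^×` is the subgroup of `𝔽_{q²}^×`
generated by `γ^(q+1)`; writing `z = γ^t`, this gives `Tr (γ^s) = 0 ↔ q + 1 ∣ s - t`. So the
`i`-th coordinate of the codeword of `β = γ^b` vanishes iff `a * i + (b - t) ≡ 0 [ZMOD q + 1]`.
For `i` ranging over `[0, n)` this linear congruence has `n * u / (q + 1)` solutions when
`u ∣ b - t` and none otherwise (`q + 1 ∣ a * n` makes it periodic with a period dividing `n`).
Hence the weight is `n - n * u / (q + 1)` or `n` according to the class of `b` modulo `u`, and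
exactly `(q² - 1) / u` exponents `b ∈ [0, q² - 1)` lie in the first class.
-/

open Finset Module Polynomial

theorem Int.exists_forall_dvd_mul_add_iff_modEq {m a c : ℤ} (hm : 0 < m)
    (hc : (Int.gcd m a : ℤ) ∣ c) :
    ∃ i₀ : ℤ, ∀ i : ℤ, m ∣ a * i + c ↔ i ≡ i₀ [ZMOD m / Int.gcd m a] := by
  obtain ⟨c', rfl⟩ := hc
  refine ⟨-(Int.gcdB m a * c'), fun i => ?_⟩
  -- Bézout: `gcd m a = m * gcdA + a * gcdB`, so `i₀` solves `a * i₀ + c ≡ 0 [ZMOD m]`.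
  have hbezout : a * i + Int.gcd m a * c' =
      (a * i - a * -(Int.gcdB m a * c')) + m * (Int.gcdA m a * c') := by
    rw [Int.gcd_eq_gcd_ab]; ring
  rw [hbezout, dvd_add_left (dvd_mul_right _ _), ← Int.modEq_iff_dvd]
  constructor
  · exact fun h => (Int.ModEq.cancel_left_div_gcd hm h).symm
  · intro h
    have hdvd : m ∣ a * (m / Int.gcd m a) := by
      rw [← Int.mul_ediv_assoc _ (Int.gcd_dvd_left m a), mul_comm,
        Int.mul_ediv_assoc _ (Int.gcd_dvd_right m a)]
      exact dvd_mul_right _ _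
    exact (h.symm.mul_left' (c := a)).of_dvd hdvd

theorem Int.natCast_div_gcd_dvd_of_dvd_mul {m n : ℕ} {a : ℤ} (hm : 0 < m)
    (hmn : (m : ℤ) ∣ a * n) : m / Int.gcd m a ∣ n := by
  have h : a * n ≡ a * 0 [ZMOD m] := by simpa using Int.modEq_zero_iff_dvd.mpr hmn
  have := Int.modEq_zero_iff_dvd.mp (Int.ModEq.cancel_left_div_gcd (by omega) h)
  exact_mod_cast (Int.natCast_div _ _).symm ▸ this

theorem Int.natCast_dvd_mul_div_gcd {m N : ℕ} (hmN : m ∣ N) (a : ℤ) :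
    (m : ℤ) ∣ a * (N / Int.gcd N a : ℕ) := by
  rw [Int.natCast_div, ← Int.mul_ediv_assoc _ (Int.gcd_dvd_left _ a), mul_comm,
    Int.mul_ediv_assoc _ (Int.gcd_dvd_right _ a)]
  exact (Int.natCast_dvd_natCast.mpr hmN).mul_right _

theorem Nat.mul_sub_div_eq_sub_div {n m d : ℕ} (hdm : d ∣ m) (hn : m / d ∣ n) :
    n * (m - d) / m = n - n / (m / d) := by
  obtain ⟨s, rfl⟩ := hdm
  rcases Nat.eq_zero_or_pos d with rfl | hd
  · simp_all
  rw [Nat.mul_div_cancel_left _ hd] at hn ⊢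
  obtain ⟨k, rfl⟩ := hn
  rcases Nat.eq_zero_or_pos s with rfl | hs
  · simp
  rw [Nat.mul_div_cancel_left _ hs, show d * s - d = d * (s - 1) by rw [Nat.mul_sub_one],
    show s * k * (d * (s - 1)) = d * s * (k * (s - 1)) by ring,
    Nat.mul_div_cancel_left _ (by positivity), Nat.mul_sub_one, mul_comm s k]

theorem Nat.card_filter_range_intModEq {s n : ℕ} (hs : 0 < s) (hsn : s ∣ n) (r : ℤ) :
    #{i ∈ range n | ((i : ℕ) : ℤ) ≡ r [ZMOD s]} = n / s := by
  have hr : ((r % s).toNat : ℤ) = r % s := Int.toNat_of_nonneg (Int.emod_nonneg _ (by omega))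
  have hmod (i : ℕ) : (i : ℤ) ≡ r [ZMOD s] ↔ i ≡ (r % s).toNat [MOD s] := by
    rw [← Int.natCast_modEq_iff, hr]
    exact ⟨fun h => h.trans (Int.mod_modEq r s).symm, fun h => h.trans (Int.mod_modEq r s)⟩
  simp only [hmod, ← Nat.count_eq_card_filter_range, Nat.count_modEq_card n hs,
    Nat.mod_eq_zero_of_dvd hsn, Nat.not_lt_zero, if_false, add_zero]

theorem Int.card_filter_range_dvd_mul_add {m : ℕ} (hm : 0 < m) {a : ℤ} {n : ℕ}
    (hmn : (m : ℤ) ∣ a * n) (c : ℤ) :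
    #{i ∈ Finset.range n | (m : ℤ) ∣ a * (i : ℕ) + c} =
      if (Int.gcd m a : ℤ) ∣ c then n / (m / Int.gcd m a) else 0 := by
  have hgm : Int.gcd m a ∣ m := by exact_mod_cast Int.gcd_dvd_left (m : ℤ) a
  split_ifs with hc
  · obtain ⟨i₀, hi₀⟩ := exists_forall_dvd_mul_add_iff_modEq (by omega) hc
    have hs0 : 0 < m / Int.gcd m a :=
      Nat.div_pos (Nat.le_of_dvd hm hgm) (Int.gcd_pos_of_ne_zero_left _ (by omega))
    rw [filter_congr fun (i : ℕ) _ => hi₀ i, ← Int.natCast_div]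
    exact Nat.card_filter_range_intModEq hs0 (natCast_div_gcd_dvd_of_dvd_mul hm hmn) i₀
  · refine card_eq_zero.mpr (filter_eq_empty_iff.mpr fun i _ hi => hc ?_)
    have := (Int.gcd_dvd_left (m : ℤ) a).trans hi
    exact (dvd_add_right ((Int.gcd_dvd_right _ _).mul_right _)).mp this

theorem Fin.card_filter_univ_eq_card_filter_range {n : ℕ} (p : ℕ → Prop) [DecidablePred p] :
    #{i : Fin n | p i} = #{i ∈ range n | p i} := by
  rw [← Nat.Iio_eq_range, ← Fin.map_valEmbedding_univ, filter_map, card_map]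
  rfl

theorem IsCyclic.card_filter_eq_card_filter_range_pow {G : Type*} [Group G] [Fintype G]
    {γ : G} (hγ : ∀ x, x ∈ Subgroup.zpowers γ) (P : G → Prop) [DecidablePred P] :
    #{x | P x} = #{j ∈ range (orderOf γ) | P (γ ^ j)} := by
  classical
  rw [← IsCyclic.image_range_orderOf hγ, filter_image, card_image_of_injOn]
  exact pow_injOn_Iio_orderOf.mono fun j hj => by simpa using (mem_filter.mp hj).1

theorem card_filter_units_eq {M₀ : Type*} [GroupWithZero M₀] [Fintype M₀] [DecidableEq M₀]
    (P : M₀ → Prop) [DecidablePred P] (h0 : ¬P 0) :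
    #{x : M₀ˣ | P x} = #{y : M₀ | P y} := by
  refine card_nbij Units.val (fun x hx => by simpa using hx) Units.val_injective.injOn
    fun y hy => ?_
  have hy0 : y ≠ 0 := by rintro rfl; exact h0 (by simpa using hy)
  exact ⟨Units.mk0 y hy0, by simpa using hy, rfl⟩

section DiscreteLog

variable {M₀ : Type*} [GroupWithZero M₀] {γ : M₀ˣ}
  (hγ : ∀ x, x ∈ Subgroup.zpowers γ) {u : ℕ} {t : ℤ} {W : M₀ → ℕ} {v₁ v₂ : ℕ}
  (hW : ∀ b : ℤ, W (γ ^ b : M₀ˣ) = if (u : ℤ) ∣ b - t then v₁ else v₂)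
include hγ hW

theorem eq_or_eq_of_zpow_eq_ite {x : M₀} (hx : x ≠ 0) : W x = v₁ ∨ W x = v₂ := by
  obtain ⟨b, hb⟩ := Subgroup.mem_zpowers_iff.mp (hγ (Units.mk0 x hx))
  rw [← Units.val_mk0 hx, ← hb, hW]
  split_ifs <;> simp

theorem card_filter_eq_of_zpow_eq_ite [Fintype M₀] (hu0 : 0 < u)
    (hu : u ∣ Fintype.card M₀ - 1) (hv : v₁ ≠ v₂) (h₁ : W 0 ≠ v₁) (h₂ : W 0 ≠ v₂) :
    #{x | W x = v₁} = (Fintype.card M₀ - 1) / u ∧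
      #{x | W x = v₂} = Fintype.card M₀ - 1 - (Fintype.card M₀ - 1) / u := by
  classical
  have hN : orderOf γ = Fintype.card M₀ - 1 := by
    rw [orderOf_eq_card_of_forall_mem_zpowers hγ, Nat.card_eq_fintype_card, Fintype.card_units]
  have hcount (v : ℕ) (h0 : W 0 ≠ v) :
      #{x | W x = v} = #{j ∈ range (Fintype.card M₀ - 1) | W (γ ^ j : M₀ˣ) = v} := by
    rw [← card_filter_units_eq _ h0, IsCyclic.card_filter_eq_card_filter_range_pow hγ, hN]
  have hlog₁ (j : ℕ) : W (γ ^ j : M₀ˣ) = v₁ ↔ (j : ℤ) ≡ t [ZMOD u] := by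
    rw [← zpow_natCast, hW, Int.modEq_comm, Int.modEq_iff_dvd]
    split_ifs <;> simp [*, hv.symm]
  have hlog₂ (j : ℕ) : W (γ ^ j : M₀ˣ) = v₂ ↔ ¬(j : ℤ) ≡ t [ZMOD u] := by
    rw [← hlog₁, ← zpow_natCast, hW]
    split_ifs <;> simp [hv, hv.symm]
  refine ⟨?_, ?_⟩
  · rw [hcount v₁ h₁, filter_congr fun j _ => hlog₁ j]
    exact Nat.card_filter_range_intModEq hu0 hu t
  · rw [hcount v₂ h₂, filter_congr fun j _ => hlog₂ j, filter_not,
      card_sdiff_of_subset (filter_subset _ _), card_range,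
      Nat.card_filter_range_intModEq hu0 hu t]

end DiscreteLog

namespace Subfield

variable {F : Type*} [Field F] (K : Subfield F)

theorem mem_iff_pow_card_eq [Fintype K] (y : F) : y ∈ K ↔ y ^ Fintype.card K = y := by
  refine ⟨fun hy => congrArg Subtype.val (FiniteField.pow_card (⟨y, hy⟩ : K)), fun hy => ?_⟩
  have hsplits : (X ^ Fintype.card K - X : K[X]).Splits := by
    rw [splits_iff_card_roots, FiniteField.roots_X_pow_card_sub_X,
      FiniteField.X_pow_card_sub_X_natDegree_eq K Fintype.one_lt_card]
    rfl
  obtain ⟨k, rfl⟩ := hsplits.mem_range_of_isRoot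
    (FiniteField.X_pow_card_sub_X_ne_zero K Fintype.one_lt_card) (i := K.subtype) (x := y)
    (by simp [hy])
  exact k.2

theorem units_zpow_mem_iff [Fintype K] {γ : Fˣ} {m : ℕ}
    (hγ : orderOf γ = (Fintype.card K - 1) * m) (s : ℤ) :
    ((γ ^ s : Fˣ) : F) ∈ K ↔ (m : ℤ) ∣ s := by
  have hq : 1 < Fintype.card K := Fintype.one_lt_card
  rw [K.mem_iff_pow_card_eq, ← Units.val_pow_eq_pow_val, Units.val_inj, ← zpow_natCast,
    ← zpow_mul, zpow_eq_zpow_iff_modEq, hγ, Int.modEq_comm, Int.modEq_iff_dvd,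
    show s * (Fintype.card K : ℤ) - s = ((Fintype.card K - 1 : ℕ) : ℤ) * s by
      push_cast [hq.le]; ring]
  push_cast
  exact mul_dvd_mul_iff_left (by omega)

theorem exists_trace_eq_zero_iff_div_mem [FiniteDimensional K F] [Algebra.IsSeparable K F]
    (h : finrank K F = 2) :
    ∃ z : F, z ≠ 0 ∧ ∀ x : F, Algebra.trace K F x = 0 ↔ x / z ∈ K := by
  have hker : finrank K (LinearMap.ker (Algebra.trace K F)) = 1 := by
    have := LinearMap.finrank_range_add_finrank_ker (Algebra.trace K F)
    rw [LinearMap.range_eq_top.mpr (Algebra.trace_surjective K F), finrank_top,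
      finrank_self, h] at this
    omega
  obtain ⟨⟨z, hz⟩, hz0⟩ := Module.finrank_pos_iff_exists_ne_zero.mp (hker ▸ one_pos)
  replace hz0 : z ≠ 0 := fun h => hz0 (Subtype.ext h)
  have hspan : K ∙ z = LinearMap.ker (Algebra.trace K F) := Submodule.eq_of_le_of_finrank_eq
    ((Submodule.span_singleton_le_iff_mem _ _).mpr hz) (by rw [finrank_span_singleton hz0, hker])
  refine ⟨z, hz0, fun x => ?_⟩
  rw [← LinearMap.mem_ker, ← hspan, Submodule.mem_span_singleton]
  constructor
  · rintro ⟨k, rfl⟩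
    rw [Subfield.smul_def, smul_eq_mul, mul_div_cancel_right₀ _ hz0]
    exact k.2
  · exact fun hx => ⟨⟨x / z, hx⟩, div_mul_cancel₀ x hz0⟩

theorem exists_trace_zpow_eq_zero_iff [Fintype F] [Fintype K] {q : ℕ}
    (hF : Fintype.card F = q ^ 2) (hK : Fintype.card K = q) {γ : Fˣ}
    (hγ : ∀ x, x ∈ Subgroup.zpowers γ) :
    ∃ t : ℤ, ∀ s : ℤ,
      Algebra.trace K F (γ ^ s : Fˣ) = 0 ↔ ((q + 1 : ℕ) : ℤ) ∣ s - t := by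
  classical
  have hq : 2 ≤ q := hK ▸ Fintype.one_lt_card
  have hrank : finrank K F = 2 := Nat.pow_right_injective hq <| by
    simpa [hF, hK] using (card_eq_pow_finrank (K := K) (V := F)).symm
  have hγ' : orderOf γ = (Fintype.card K - 1) * (q + 1) := by
    rw [orderOf_eq_card_of_forall_mem_zpowers hγ, Nat.card_eq_fintype_card, Fintype.card_units,
      hF, hK, mul_comm, ← Nat.sq_sub_sq, one_pow]
  obtain ⟨z, hz0, hz⟩ := K.exists_trace_eq_zero_iff_div_mem hrank
  obtain ⟨t, ht⟩ := Subgroup.mem_zpowers_iff.mp (hγ (Units.mk0 z hz0))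
  refine ⟨t, fun s => ?_⟩
  rw [hz, ← Units.val_mk0 hz0, ← ht, ← Units.val_div_eq_div_val, div_eq_mul_inv, ← zpow_sub,
    K.units_zpow_mem_iff hγ']

end Subfield

section TraceCode

variable {F : Type*} [Field F] [DecidableEq F] (K : Subfield F) (γ : Fˣ) (a : ℤ) (n : ℕ)

noncomputable def traceCode (β : F) : Fin n → K :=
  fun i => Algebra.trace K F ((γ ^ (a * (i : ℕ)) : Fˣ) * β)

theorem hammingNorm_traceCode_zero : hammingNorm (traceCode K γ a n 0) = 0 :=
  hammingNorm_eq_zero.mpr (funext fun _ => by simp [traceCode])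

variable {K γ a n}

theorem hammingNorm_traceCode_zpow {m : ℕ} (hm : 0 < m) {t : ℤ}
    (ht : ∀ s : ℤ, Algebra.trace K F (γ ^ s : Fˣ) = 0 ↔ (m : ℤ) ∣ s - t)
    (hmn : (m : ℤ) ∣ a * n) (b : ℤ) :
    hammingNorm (traceCode K γ a n (γ ^ b : Fˣ)) =
      if (Int.gcd m a : ℤ) ∣ b - t then n - n / (m / Int.gcd m a) else n := by
  have hzeros : #{i | traceCode K γ a n (γ ^ b : Fˣ) i = 0} =
      if (Int.gcd m a : ℤ) ∣ b - t then n / (m / Int.gcd m a) else 0 := by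
    simp only [traceCode, ← Units.val_mul, ← zpow_add, ht, add_sub_assoc]
    rw [Fin.card_filter_univ_eq_card_filter_range (fun i => (m : ℤ) ∣ a * i + (b - t)),
      Int.card_filter_range_dvd_mul_add hm hmn]
  have hsplit := card_filter_add_card_filter_not (s := univ)
    (fun i => traceCode K γ a n (γ ^ b : Fˣ) i = 0)
  rw [card_univ, Fintype.card_fin, hzeros] at hsplit
  unfold hammingNorm
  by_cases h : (Int.gcd m a : ℤ) ∣ b - t <;>
    simp only [h, if_true, if_false, ne_eq] at hsplit ⊢ <;> omega

end TraceCode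

theorem stmt_11_general (q : ℕ)
    (F : Type*) [Field F] [Fintype F] [DecidableEq F] (hF : Fintype.card F = q ^ 2)
    (K : Subfield F) [Fintype K] (hK : Fintype.card K = q)
    (γ : Fˣ) (hγ : ∀ x : Fˣ, x ∈ Subgroup.zpowers γ)
    (a : ℤ) (u : ℕ) (hu : u = Int.gcd (q + 1 : ℕ) a) (huq : u ≤ q)
    (n : ℕ) (hn : n = (q ^ 2 - 1) / Int.gcd (q ^ 2 - 1 : ℕ) a)
    (c : F → Fin n → K)
    (hc : ∀ β i, c β i = Algebra.trace K F ((γ ^ (a * (i : ℕ)) : Fˣ) * β))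
    (w : F → ℕ) (hw : ∀ β, w β = (Finset.univ.filter fun i : Fin n => c β i ≠ 0).card) :
    (∀ β : F, β ≠ 0 → w β = n * (q + 1 - u) / (q + 1) ∨ w β = n) ∧
    (Finset.univ.filter fun β : F => w β = n * (q + 1 - u) / (q + 1)).card
      = (q ^ 2 - 1) / u ∧
    (Finset.univ.filter fun β : F => w β = n).card = (q ^ 2 - 1) * (u - 1) / u := by
  have hq : 2 ≤ q := hK ▸ Fintype.one_lt_card
  have hqN : q + 1 ∣ q ^ 2 - 1 := ⟨q - 1, by simpa using Nat.sq_sub_sq q 1⟩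
  have hu0 : 0 < u := hu ▸ Int.gcd_pos_of_ne_zero_left _ (by omega)
  have huq1 : u ∣ q + 1 := hu ▸ by exact_mod_cast Int.gcd_dvd_left ((q + 1 : ℕ) : ℤ) a
  have hn0 : 0 < n :=
    hn ▸ Nat.div_gcd_pos_of_pos_left a.natAbs (Nat.sub_pos_of_lt (Nat.one_lt_pow two_ne_zero hq))
  have hmn : ((q + 1 : ℕ) : ℤ) ∣ a * n := hn ▸ Int.natCast_dvd_mul_div_gcd hqN a
  have hsn : (q + 1) / u ∣ n := hu ▸ Int.natCast_div_gcd_dvd_of_dvd_mul (by omega) hmn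
  have hs : 1 < (q + 1) / u := by rw [Nat.lt_div_iff_mul_lt' huq1]; omega
  have hv₁ : 0 < n / ((q + 1) / u) := Nat.div_pos (Nat.le_of_dvd hn0 hsn) (by omega)
  have hv₂ : n / ((q + 1) / u) < n := Nat.div_lt_self hn0 hs
  obtain ⟨t, ht⟩ := K.exists_trace_zpow_eq_zero_iff hF hK hγ
  have hw' (β : F) : w β = hammingNorm (traceCode K γ a n β) := by simp only [hw, hc]; rfl
  have hweight (b : ℤ) :
      w (γ ^ b : Fˣ) = if (u : ℤ) ∣ b - t then n - n / ((q + 1) / u) else n := by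
    rw [hw', hammingNorm_traceCode_zpow (by omega) ht hmn, ← hu]
  have hlow : n * (q + 1 - u) / (q + 1) = n - n / ((q + 1) / u) :=
    Nat.mul_sub_div_eq_sub_div huq1 hsn
  have hhigh : (q ^ 2 - 1) * (u - 1) / u = q ^ 2 - 1 - (q ^ 2 - 1) / u := by
    simpa using Nat.mul_sub_div_eq_sub_div (one_dvd u) (by simpa using huq1.trans hqN)
  obtain ⟨hcard₁, hcard₂⟩ := card_filter_eq_of_zpow_eq_ite hγ hweight hu0
    (hF ▸ huq1.trans hqN) (by omega) (by rw [hw', hammingNorm_traceCode_zero]; omega)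
    (by rw [hw', hammingNorm_traceCode_zero]; omega)
  rw [hF] at hcard₁ hcard₂
  exact ⟨fun β hβ => hlow ▸ eq_or_eq_of_zpow_eq_ite hγ hweight hβ, hlow ▸ hcard₁,
    hhigh ▸ hcard₂⟩

theorem stmt_11 (q : ℕ) (hq : IsPrimePow q)
    (F : Type*) [Field F] [Fintype F] [DecidableEq F] (hF : Fintype.card F = q ^ 2)
    (K : Subfield F) [Fintype K] (hK : Fintype.card K = q)
    (γ : Fˣ) (hγ : ∀ x : Fˣ, x ∈ Subgroup.zpowers γ)
    (a : ℤ) (u : ℕ) (hu : u = Int.gcd (q + 1 : ℕ) a) (hu2 : 2 ≤ u) (huq : u ≤ q)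
    (n : ℕ) (hn : n = (q ^ 2 - 1) / Int.gcd (q ^ 2 - 1 : ℕ) a)
    (c : F → Fin n → K)
    (hc : ∀ β i, c β i = Algebra.trace K F ((γ ^ (a * (i : ℕ)) : Fˣ) * β))
    (w : F → ℕ) (hw : ∀ β, w β = (Finset.univ.filter fun i : Fin n => c β i ≠ 0).card) :
    (∀ β : F, β ≠ 0 → w β = n * (q + 1 - u) / (q + 1) ∨ w β = n) ∧
    (Finset.univ.filter fun β : F => w β = n * (q + 1 - u) / (q + 1)).card
      = (q ^ 2 - 1) / u ∧
    (Finset.univ.filter fun β : F => w β = n).card = (q ^ 2 - 1) * (u - 1) / u :=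
  stmt_11_general q F hF K hK γ hγ a u hu huq n hn c hc w hw
end

section
/- Let q be a prime power, γ a generator of F_{q^2}^×, and a an integer. Let u = gcd(q+1, a) and n = (q^2-1)/gcd(q^2-1,a). Then the map β ↦ (Tr(γ^{a i} β))_{0 ≤ i < n} is injective if and only if u < q+1. -/
open Polynomial in
private lemma memK_of_pow (q : ℕ) (hq : 2 ≤ q) (F : Type*) [Field F] [Fintype F] [DecidableEq F]
    (K : Subfield F) [Fintype K] (hK : Fintype.card K = q) (x : F) (hx : x ^ q = x) : x ∈ K := by
  classical
  set p : F[X] := X ^ q - X with hp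
  have hdeg : p.natDegree = q := by
    rw [hp, natDegree_sub_eq_left_of_natDegree_lt] <;>
      simp [natDegree_X_pow] <;> omega
  have hp0 : p ≠ 0 := fun h => by simp [h] at hdeg; omega
  have hroots : ∀ y : F, y ^ q = y → y ∈ p.roots.toFinset := by
    intro y hy
    simp [hp, Multiset.mem_toFinset, mem_roots, hp0, IsRoot, sub_eq_zero, hy]
    exact fun h => hp0 (by rw [hp, h, sub_self])
  set T : Finset F := (Finset.univ : Finset K).image (fun k : K => (k : F)) with hT
  have hTcard : T.card = q := by
    rw [hT, Finset.card_image_of_injective _ Subtype.coe_injective, Finset.card_univ, hK]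
  have hTsub : T ⊆ p.roots.toFinset := by
    intro y hy
    rw [hT, Finset.mem_image] at hy
    obtain ⟨k, -, rfl⟩ := hy
    apply hroots
    have h1 : k ^ q = k := by rw [← hK]; exact FiniteField.pow_card k
    exact_mod_cast congrArg (Subtype.val) h1
  have hcard : p.roots.toFinset.card ≤ q := by
    calc p.roots.toFinset.card ≤ Multiset.card p.roots := p.roots.toFinset_card_le
    _ ≤ p.natDegree := p.card_roots'
    _ = q := hdeg
  have hTeq : T = p.roots.toFinset := Finset.eq_of_subset_of_card_le hTsub (by omega)
  have hxT : x ∈ T := hTeq ▸ hroots x hx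
  rw [hT, Finset.mem_image] at hxT
  obtain ⟨k, -, rfl⟩ := hxT
  exact k.2

set_option maxHeartbeats 1000000 in
theorem stmt_13 (q : ℕ) (hq : IsPrimePow q)
    (F : Type*) [Field F] [Fintype F] [DecidableEq F] (hF : Fintype.card F = q ^ 2)
    (K : Subfield F) [Fintype K] (hK : Fintype.card K = q)
    (γ : Fˣ) (hγ : ∀ x : Fˣ, x ∈ Subgroup.zpowers γ)
    (a : ℤ) (u : ℕ) (hu : u = Int.gcd (q + 1 : ℕ) a)
    (n : ℕ) (hn : n = (q ^ 2 - 1) / Int.gcd (q ^ 2 - 1 : ℕ) a)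
    (c : F → Fin n → K)
    (hc : ∀ β i, c β i = Algebra.trace K F ((γ ^ (a * (i : ℕ)) : Fˣ) * β)) :
    Function.Injective c ↔ u < q + 1 := by
  classical
  have hq2 : 2 ≤ q := hq.two_le
  have hq4 : 4 ≤ q ^ 2 := by nlinarith
  have fd : FiniteDimensional K F := Module.Finite.of_finite
  have hord : orderOf γ = q ^ 2 - 1 := by
    rw [orderOf_eq_card_of_forall_mem_zpowers hγ, Nat.card_eq_fintype_card,
      Fintype.card_units, hF]
  have hcast : ((q ^ 2 - 1 : ℕ) : ℤ) = ((q : ℤ) + 1) * ((q : ℤ) - 1) := by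
    push_cast [Nat.cast_sub (by omega : 1 ≤ q ^ 2)]
    ring
  -- L3 : (q+1) ∣ a → u = q + 1
  have L3 : (((q : ℤ) + 1) ∣ a) → u = q + 1 := by
    intro h
    have : ((((q : ℕ) + 1 : ℕ)) : ℤ) ∣ a := by push_cast; exact h
    rw [hu, Int.gcd_eq_natAbs_left this, Int.natAbs_natCast]
  -- Lγ : coercion of γ^a in K implies (q+1) ∣ a
  have Lγ : ((γ ^ a : Fˣ) : F) ∈ K → ((q : ℤ) + 1) ∣ a := by
    intro hmem
    have hne : ((γ ^ a : Fˣ) : F) ≠ 0 := Units.ne_zero _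
    set k : K := ⟨((γ ^ a : Fˣ) : F), hmem⟩ with hk
    have hk0 : k ≠ 0 := fun h => hne (by simpa [hk] using congrArg Subtype.val h)
    have h1 : k ^ (Fintype.card K - 1) = 1 := FiniteField.pow_card_sub_one_eq_one k hk0
    rw [hK] at h1
    have h2 : ((γ ^ a : Fˣ) : F) ^ (q - 1) = 1 := by
      have := congrArg (Subtype.val) h1
      push_cast at this
      simpa [hk] using this
    have h3 : (γ ^ a) ^ ((q - 1 : ℕ) : ℤ) = 1 := by
      ext
      push_cast
      simpa using h2
    rw [← zpow_mul] at h3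
    have h4 : ((orderOf γ : ℤ)) ∣ a * ((q - 1 : ℕ) : ℤ) := orderOf_dvd_iff_zpow_eq_one.mpr h3
    rw [hord, hcast] at h4
    have hsub : ((q - 1 : ℕ) : ℤ) = (q : ℤ) - 1 := by push_cast [Nat.cast_sub (by omega : 1 ≤ q)]; ring
    rw [hsub] at h4
    obtain ⟨m, hm⟩ := h4
    refine ⟨m, ?_⟩
    have hq1 : ((q : ℤ) - 1) ≠ 0 := by
      have : (2 : ℤ) ≤ (q : ℤ) := by exact_mod_cast hq2
      omega
    have : a * ((q:ℤ) - 1) = ((q:ℤ) + 1) * m * ((q:ℤ) - 1) := by rw [hm]; ring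
    exact mul_right_cancel₀ hq1 this
  -- Lγ2 : (q+1) ∣ a implies coercion of γ^a is in K
  have Lγ2 : ((q : ℤ) + 1) ∣ a → ((γ ^ a : Fˣ) : F) ∈ K := by
    rintro ⟨b, rfl⟩
    apply memK_of_pow q hq2 F K hK
    have h1 : (γ ^ (((q : ℤ) + 1) * b)) ^ ((q - 1 : ℕ) : ℤ) = 1 := by
      rw [← zpow_mul]
      have heq : ((q : ℤ) + 1) * b * ((q - 1 : ℕ) : ℤ) = ((q ^ 2 - 1 : ℕ) : ℤ) * b := by
        rw [hcast]; push_cast [Nat.cast_sub (by omega : 1 ≤ q)]; ring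
      rw [heq, zpow_mul, zpow_natCast, ← hord, pow_orderOf_eq_one, one_zpow]
    have h2 : ((γ ^ (((q : ℤ) + 1) * b) : Fˣ) : F) ^ (q - 1) = 1 := by
      have := congrArg (Units.val) h1
      push_cast at this
      simpa using this
    calc ((γ ^ (((q : ℤ) + 1) * b) : Fˣ) : F) ^ q
        = ((γ ^ (((q : ℤ) + 1) * b) : Fˣ) : F) ^ (q - 1) * ((γ ^ (((q : ℤ) + 1) * b) : Fˣ) : F) := by
          rw [← pow_succ]; congr 1; omega
      _ = _ := by rw [h2, one_mul]
  constructor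
  · -- injective → u < q + 1
    intro hinj
    by_contra hlt
    push_neg at hlt
    have hdvd : ((q : ℤ) + 1) ∣ a := by
      have h1 : (u : ℤ) ∣ (((q : ℕ) + 1 : ℕ) : ℤ) := hu ▸ Int.gcd_dvd_left _ _
      have h2 : u ∣ q + 1 := by exact_mod_cast h1
      have h3 : u = q + 1 := Nat.le_antisymm (Nat.le_of_dvd (by omega) h2) hlt
      have h4 : (u : ℤ) ∣ a := hu ▸ Int.gcd_dvd_right _ _
      rw [h3] at h4
      exact_mod_cast h4
    obtain ⟨k, hkmem⟩ : ∃ k : K, (k : F) = ((γ ^ a : Fˣ) : F) := ⟨⟨_, Lγ2 hdvd⟩, rfl⟩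
    -- trace is not injective
    have htn : ¬ Function.Injective (Algebra.trace K F) := by
      intro h
      have := Fintype.card_le_of_injective _ h
      rw [hF, hK] at this
      nlinarith
    rw [Function.not_injective_iff] at htn
    obtain ⟨y, z, hyz, hne⟩ := htn
    have hβ0 : Algebra.trace K F (y - z) = 0 := by rw [map_sub, hyz, sub_self]
    have hc0 : c (y - z) = c 0 := by
      funext i
      rw [hc, hc, mul_zero, map_zero]
      have hγi : ((γ ^ (a * (i : ℕ)) : Fˣ) : F) = ((k ^ (i : ℕ) : K) : F) := by
        have he : (γ ^ (a * (i : ℕ))) = (γ ^ a) ^ (i : ℕ) := by rw [zpow_mul, zpow_natCast]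
        rw [he, Units.val_pow_eq_pow_val, ← hkmem]
        norm_cast
      rw [hγi]
      have : ((k ^ (i : ℕ) : K) : F) * (y - z) = (k ^ (i : ℕ)) • (y - z) := rfl
      rw [this, map_smul, hβ0, smul_zero]
    exact absurd (hinj hc0) (sub_ne_zero.mpr hne)
  · -- u < q + 1 → injective
    intro huq β β' h
    by_contra hne
    have hδ : β - β' ≠ 0 := sub_ne_zero.mpr (fun h' => hne h')
    set δ := β - β' with hδdef
    have hdvdn' : ¬ (((q : ℤ) + 1) ∣ a) := fun hd => absurd (L3 hd) (by omega)
    -- n ≥ 2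
    have h2n : 2 ≤ n := by
      set g := Int.gcd (q ^ 2 - 1 : ℕ) a with hg
      have hgdvd : g ∣ q ^ 2 - 1 := by
        have : (g : ℤ) ∣ ((q ^ 2 - 1 : ℕ) : ℤ) := Int.gcd_dvd_left _ _
        exact_mod_cast this
      have hgne : g ≠ q ^ 2 - 1 := by
        intro hgeq
        apply hdvdn'
        have h1 : (g : ℤ) ∣ a := Int.gcd_dvd_right _ _
        have h2 : ((q : ℤ) + 1) ∣ (g : ℤ) := by
          rw [hgeq]
          exact ⟨(q : ℤ) - 1, hcast⟩
        exact h2.trans h1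
      have hmul : n * g = q ^ 2 - 1 := by
        rw [hn]; exact Nat.div_mul_cancel hgdvd
      by_contra hlt
      push_neg at hlt
      have hn01 : n = 0 ∨ n = 1 := by omega
      rcases hn01 with rfl | rfl
      · simp at hmul; omega
      · simp at hmul; omega
    -- trace of δ and of γ^a • δ vanish
    have hkey : ∀ i : Fin n, Algebra.trace K F (((γ ^ (a * (i : ℕ)) : Fˣ) : F) * δ) = 0 := by
      intro i
      rw [hδdef, mul_sub, map_sub]
      have := congrFun h i
      rw [hc, hc] at this
      rw [this, sub_self]
    have h0 : Algebra.trace K F δ = 0 := by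
      have := hkey ⟨0, by omega⟩
      simpa using this
    set x : F := ((γ ^ a : Fˣ) : F) with hx
    have h1 : Algebra.trace K F (x * δ) = 0 := by
      have := hkey ⟨1, by omega⟩
      simpa [hx] using this
    have hxK : x ∉ K := fun hmem => hdvdn' (Lγ hmem)
    -- δ and x * δ are linearly independent
    have hli : LinearIndependent K ![δ, x * δ] := by
      rw [LinearIndependent.pair_iff]
      intro s t hst
      by_contra hc'
      have ht : t ≠ 0 := by
        intro ht0
        rw [ht0, zero_smul, add_zero, smul_eq_zero] at hst
        tauto
      apply hxK
      have hs : s • δ + t • (x * δ) = ((s : F) + (t : F) * x) * δ := by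
        simp [Subfield.smul_def]
        ring
      rw [hs, mul_eq_zero] at hst
      have hsum : (s : F) + (t : F) * x = 0 := by tauto
      have hxv : x = ((-s / t : K) : F) := by
        have ht' : (t : F) ≠ 0 := fun h' => ht (Subtype.coe_injective (by simpa using h'))
        push_cast
        rw [eq_div_iff ht']
        linear_combination hsum
      rw [hxv]
      exact (-s / t).2
    have hfr : Module.finrank K F = 2 := by
      have hcards := Module.card_eq_pow_finrank (K := K) (V := F)
      rw [hF, hK] at hcards
      exact (Nat.pow_right_injective hq2 hcards).symm
    have hcard2 : Fintype.card (Fin 2) = Module.finrank K F := by simp [hfr]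
    set b := basisOfLinearIndependentOfCardEqFinrank hli hcard2 with hb
    have hbval : ⇑b = ![δ, x * δ] := coe_basisOfLinearIndependentOfCardEqFinrank hli hcard2
    have htr0 : (Algebra.trace K F) = 0 := by
      apply b.ext
      intro i
      have hbi : b i = ![δ, x * δ] i := congrFun hbval i
      rw [hbi, LinearMap.zero_apply]
      fin_cases i
      · simpa using h0
      · simpa using h1
    exact Algebra.trace_ne_zero K F htr0
end
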